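/- arXiv:2509.02823 — 2 statements merged into one kernel-verified Lean document; each statement's English description precedes it below -/
import Mathlib

section
/- Given a finite set P of points in K² and a finite set L of lines in K², where K is a field of characteristic zero, there exist an injective map φ_P from P to points of ℂ² and an injective map φ_L from L to lines of ℂ² such that for every p ∈ P and l ∈ L, p lies on l if and only if φ_P(p) lies on φ_L(l). -/
set_option maxHeartbeats 2000000
set_option synthInstance.maxHeartbeats 1000000

open scoped Classical

/-- A line in the plane `E²` is the zero set of a nontrivial affine equation. -/
def IsLine (E : Type) [Field E] (S : Set (E × E)) : Prop :=
  ∃ a b c : E, (a, b) ≠ (0, 0) ∧ S = {p : E × E | a * p.1 + b * p.2 + c = 0}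

theorem exists_ringHom_complex {K : Type} [Field K] [CharZero K] (F : Subfield K)
    (hF : Cardinal.mk F ≤ Cardinal.aleph0) : Nonempty (F →+* ℂ) := by
  haveI : CharZero F := ⟨fun a b h => Nat.cast_injective (R := K)
    (by simpa using congrArg (Subfield.subtype F) h)⟩
  set R := MvPolynomial ℝ F with hR
  haveI : CharZero R := charZero_of_injective_algebraMap (MvPolynomial.C_injective ℝ F)
  set Fr := FractionRing R with hFr
  set A := AlgebraicClosure Fr with hA
  have cardA : (Cardinal.mk A) = Cardinal.continuum := by
    apply le_antisymm
    · calc (Cardinal.mk A) ≤ max (Cardinal.mk Fr) Cardinal.aleph0 :=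
          Algebra.IsAlgebraic.cardinalMk_le_max Fr A
        _ = max (Cardinal.mk R) Cardinal.aleph0 := by rw [FractionRing.cardinalMk]
        _ ≤ max (max (max (Cardinal.mk F) (Cardinal.mk ℝ)) Cardinal.aleph0) Cardinal.aleph0 :=
            max_le_max_right _ (MvPolynomial.cardinalMk_le_max)
        _ ≤ Cardinal.continuum := by
            simp only [max_le_iff, Cardinal.mk_real]
            exact ⟨⟨⟨hF.trans Cardinal.aleph0_le_continuum, le_rfl⟩,
              Cardinal.aleph0_le_continuum⟩, Cardinal.aleph0_le_continuum⟩
    · rw [← Cardinal.mk_real]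
      apply Cardinal.mk_le_of_injective (f := fun r : ℝ => algebraMap R A (MvPolynomial.X r))
      have h1 : Function.Injective (algebraMap R A) := by
        rw [IsScalarTower.algebraMap_eq R Fr A]
        exact (RingHom.injective (algebraMap Fr A)).comp (IsFractionRing.injective R Fr)
      exact h1.comp (MvPolynomial.X_injective)
  obtain ⟨e⟩ := IsAlgClosed.ringEquiv_of_equiv_of_charZero (K := A) (L := ℂ)
    (by rw [cardA]; exact Cardinal.aleph0_lt_continuum)
    (Cardinal.eq.1 (by rw [cardA, Cardinal.mk_complex]))
  exact ⟨(e.toRingHom.comp (algebraMap R A)).comp (MvPolynomial.C)⟩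

theorem line_coeff_prop {E : Type*} [Field E] {a1 b1 c1 a2 b2 c2 : E}
    (h1 : (a1, b1) ≠ (0, 0)) (h2 : (a2, b2) ≠ (0, 0))
    (h : {p : E × E | a1 * p.1 + b1 * p.2 + c1 = 0} =
         {p : E × E | a2 * p.1 + b2 * p.2 + c2 = 0}) :
    a1 * b2 = a2 * b1 ∧ a1 * c2 = a2 * c1 ∧ b1 * c2 = b2 * c1 := by
  have H : ∀ p : E × E, a1 * p.1 + b1 * p.2 + c1 = 0 ↔ a2 * p.1 + b2 * p.2 + c2 = 0 :=
    fun p => Set.ext_iff.1 h p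
  by_cases hb1 : b1 ≠ 0
  · have key : ∀ t : E, a2 * t * b1 - b2 * (a1 * t + c1) + c2 * b1 = 0 := by
      intro t
      have e1 : a1 * t + b1 * (-(a1 * t + c1) * b1⁻¹) + c1 = 0 := by field_simp; ring
      have e2 := (H (t, -(a1 * t + c1) * b1⁻¹)).1 e1
      have e3 : b1 * (a2 * t + b2 * (-(a1 * t + c1) * b1⁻¹) + c2) = 0 := by rw [e2]; ring
      have hinv : b1 * b1⁻¹ = 1 := mul_inv_cancel₀ hb1
      linear_combination e3 + (b2 * (a1*t+c1)) * hinv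
    have k0 := key 0
    have k1 := key 1
    have bc : b1 * c2 = b2 * c1 := by linear_combination k0
    have ab : a1 * b2 = a2 * b1 := by linear_combination k0 - k1
    refine ⟨ab, ?_, bc⟩
    have : b1 * (a1 * c2) = b1 * (a2 * c1) := by linear_combination a1 * bc + c1 * ab
    exact mul_left_cancel₀ hb1 this
  · push_neg at hb1
    subst hb1
    have ha1 : a1 ≠ 0 := by
      intro ha; exact h1 (by rw [ha])
    have key : ∀ t : E, a2 * (-c1) + b2 * t * a1 + c2 * a1 = 0 := by
      intro t
      have e1 : a1 * (-c1 * a1⁻¹) + 0 * t + c1 = 0 := by field_simp; ring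
      have e2 := (H (-c1 * a1⁻¹, t)).1 e1
      have e3 : a1 * (a2 * (-c1 * a1⁻¹) + b2 * t + c2) = 0 := by rw [e2]; ring
      have hinv : a1 * a1⁻¹ = 1 := mul_inv_cancel₀ ha1
      linear_combination e3 + (a2 * c1) * hinv
    have k0 := key 0
    have k1 := key 1
    have hb2 : b2 * a1 = 0 := by linear_combination k1 - k0
    have hb2' : b2 = 0 := by
      rcases mul_eq_zero.1 hb2 with h | h
      · exact h
      · exact absurd h ha1
    subst hb2'
    refine ⟨by ring, ?_, by ring⟩
    have : a1 * c2 = a2 * c1 := by linear_combination k0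
    exact this

theorem line_subset_of_cross {E : Type*} [Field E] {a1 b1 c1 a2 b2 c2 : E}
    (h1 : (a1, b1) ≠ (0, 0))
    (hab : a1 * b2 = a2 * b1) (hac : a1 * c2 = a2 * c1) (hbc : b1 * c2 = b2 * c1) :
    {p : E × E | a1 * p.1 + b1 * p.2 + c1 = 0} ⊆
      {p : E × E | a2 * p.1 + b2 * p.2 + c2 = 0} := by
  intro p hp
  simp only [Set.mem_setOf_eq] at hp ⊢
  by_cases ha1 : a1 ≠ 0
  · have : a1 * (a2 * p.1 + b2 * p.2 + c2) = 0 := by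
      linear_combination a2 * hp + p.2 * hab + hac
    exact (mul_eq_zero.1 this).resolve_left ha1
  · push_neg at ha1
    have hb1 : b1 ≠ 0 := by
      intro hb; exact h1 (by rw [ha1, hb])
    have : b1 * (a2 * p.1 + b2 * p.2 + c2) = 0 := by
      linear_combination b2 * hp - p.1 * hab + hbc
    exact (mul_eq_zero.1 this).resolve_left hb1

/-- Finite point-line configurations over a characteristic-zero field embed into ℂ²
preserving and reflecting incidences. -/
theorem stmt1 {K : Type} [Field K] [CharZero K]
    (P : Finset (K × K)) (L : Finset (Set (K × K))) (hL : ∀ l ∈ L, IsLine K l) :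
    ∃ (φP : K × K → ℂ × ℂ) (φL : Set (K × K) → Set (ℂ × ℂ)),
      Set.InjOn φP P ∧ Set.InjOn φL L ∧
      (∀ l ∈ L, IsLine ℂ (φL l)) ∧
      ∀ p ∈ P, ∀ l ∈ L, (p ∈ l ↔ φP p ∈ φL l) := by
  classical
  choose a b c hab hset using hL
  set S : Set K := (Prod.fst '' (P : Set (K × K))) ∪ (Prod.snd '' (P : Set (K × K))) ∪
    (⋃ l : {l // l ∈ L}, {a l.1 l.2, b l.1 l.2, c l.1 l.2}) with hS
  have hSfin : S.Finite := by
    refine (((P.finite_toSet.image _)).union (P.finite_toSet.image _)).union ?_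
    exact Set.finite_iUnion (fun l => ((Set.finite_singleton _).insert _).insert _)
  set F := Subfield.closure S with hF
  obtain ⟨f⟩ := exists_ringHom_complex F
    (le_trans (Subfield.cardinalMk_closure_le_max S)
      (max_le hSfin.countable.le_aleph0 le_rfl))
  have hmemP1 : ∀ p ∈ P, (p : K × K).1 ∈ F := fun p hp =>
    Subfield.subset_closure (Or.inl (Or.inl ⟨p, hp, rfl⟩))
  have hmemP2 : ∀ p ∈ P, (p : K × K).2 ∈ F := fun p hp =>
    Subfield.subset_closure (Or.inl (Or.inr ⟨p, hp, rfl⟩))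
  have hmema : ∀ l (h : l ∈ L), a l h ∈ F := fun l h =>
    Subfield.subset_closure (Or.inr (Set.mem_iUnion.2 ⟨⟨l, h⟩, by simp⟩))
  have hmemb : ∀ l (h : l ∈ L), b l h ∈ F := fun l h =>
    Subfield.subset_closure (Or.inr (Set.mem_iUnion.2 ⟨⟨l, h⟩, by simp⟩))
  have hmemc : ∀ l (h : l ∈ L), c l h ∈ F := fun l h =>
    Subfield.subset_closure (Or.inr (Set.mem_iUnion.2 ⟨⟨l, h⟩, by simp⟩))
  set g : K → ℂ := fun x => if h : x ∈ F then f ⟨x, h⟩ else 0 with hg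
  have hgF : ∀ (x : K) (hx : x ∈ F), g x = f ⟨x, hx⟩ := fun x hx => dif_pos hx
  have hginj : ∀ x y, x ∈ F → y ∈ F → g x = g y → x = y := by
    intro x y hx hy hxy
    rw [hgF x hx, hgF y hy] at hxy
    exact congrArg Subtype.val (f.injective hxy)
  have hgz : g 0 = 0 := by
    rw [hgF 0 (zero_mem F)]
    exact map_zero f
  have hg0 : ∀ x, x ∈ F → (g x = 0 ↔ x = 0) := by
    intro x hx
    constructor
    · intro h
      exact hginj x 0 hx (zero_mem F) (by rw [h, hgz])
    · intro h; subst h; exact hgz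
  have hgmul : ∀ x y, x ∈ F → y ∈ F → g (x * y) = g x * g y := by
    intro x y hx hy
    rw [hgF x hx, hgF y hy, hgF (x * y) (mul_mem hx hy), ← map_mul]
    exact congrArg f (Subtype.ext rfl)
  have hgadd : ∀ x y, x ∈ F → y ∈ F → g (x + y) = g x + g y := by
    intro x y hx hy
    rw [hgF x hx, hgF y hy, hgF (x + y) (add_mem hx hy), ← map_add]
    exact congrArg f (Subtype.ext rfl)
  have hCnz : ∀ l (h : l ∈ L), (g (a l h), g (b l h)) ≠ (0, 0) := by
    intro l h heq
    apply hab l h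
    rw [Prod.mk.injEq] at heq ⊢
    exact ⟨(hg0 _ (hmema l h)).1 heq.1, (hg0 _ (hmemb l h)).1 heq.2⟩
  have hval : ∀ l (h : l ∈ L), ∀ p ∈ P,
      g (a l h) * g (p : K × K).1 + g (b l h) * g (p : K × K).2 + g (c l h) =
        g (a l h * (p : K × K).1 + b l h * (p : K × K).2 + c l h) := by
    intro l h p hp
    rw [hgadd _ _ (add_mem (mul_mem (hmema l h) (hmemP1 p hp))
        (mul_mem (hmemb l h) (hmemP2 p hp))) (hmemc l h),
      hgadd _ _ (mul_mem (hmema l h) (hmemP1 p hp)) (mul_mem (hmemb l h) (hmemP2 p hp)),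
      hgmul _ _ (hmema l h) (hmemP1 p hp), hgmul _ _ (hmemb l h) (hmemP2 p hp)]
  refine ⟨fun p => (g p.1, g p.2),
    fun l => if h : l ∈ L then
      {q : ℂ × ℂ | g (a l h) * q.1 + g (b l h) * q.2 + g (c l h) = 0} else ∅,
    ?_, ?_, ?_, ?_⟩
  · intro p hp q hq hpq
    have hp' := Finset.mem_coe.1 hp
    have hq' := Finset.mem_coe.1 hq
    have h1 := congrArg Prod.fst hpq
    have h2 := congrArg Prod.snd hpq
    exact Prod.ext (hginj _ _ (hmemP1 p hp') (hmemP1 q hq') h1)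
      (hginj _ _ (hmemP2 p hp') (hmemP2 q hq') h2)
  · intro l1 hl1 l2 hl2 heq
    have hl1' := Finset.mem_coe.1 hl1
    have hl2' := Finset.mem_coe.1 hl2
    simp only [dif_pos hl1', dif_pos hl2'] at heq
    obtain ⟨hab', hac', hbc'⟩ := line_coeff_prop (hCnz l1 hl1') (hCnz l2 hl2') heq
    have e1 : a l1 hl1' * b l2 hl2' = a l2 hl2' * b l1 hl1' := by
      apply hginj _ _ (mul_mem (hmema _ _) (hmemb _ _)) (mul_mem (hmema _ _) (hmemb _ _))
      rw [hgmul _ _ (hmema _ _) (hmemb _ _), hgmul _ _ (hmema _ _) (hmemb _ _)]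
      exact hab'
    have e2 : a l1 hl1' * c l2 hl2' = a l2 hl2' * c l1 hl1' := by
      apply hginj _ _ (mul_mem (hmema _ _) (hmemc _ _)) (mul_mem (hmema _ _) (hmemc _ _))
      rw [hgmul _ _ (hmema _ _) (hmemc _ _), hgmul _ _ (hmema _ _) (hmemc _ _)]
      exact hac'
    have e3 : b l1 hl1' * c l2 hl2' = b l2 hl2' * c l1 hl1' := by
      apply hginj _ _ (mul_mem (hmemb _ _) (hmemc _ _)) (mul_mem (hmemb _ _) (hmemc _ _))
      rw [hgmul _ _ (hmemb _ _) (hmemc _ _), hgmul _ _ (hmemb _ _) (hmemc _ _)]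
      exact hbc'
    rw [hset l1 hl1', hset l2 hl2']
    exact Set.Subset.antisymm
      (line_subset_of_cross (hab l1 hl1') e1 e2 e3)
      (line_subset_of_cross (hab l2 hl2') e1.symm e2.symm e3.symm)
  · intro l hl
    refine ⟨g (a l hl), g (b l hl), g (c l hl), hCnz l hl, ?_⟩
    simp only [dif_pos hl]
  · intro p hp l hl
    have hpl : p ∈ l ↔ p ∈ {q : K × K | a l hl * q.1 + b l hl * q.2 + c l hl = 0} := by
      rw [← hset l hl]
    rw [hpl]
    simp only [Set.mem_setOf_eq, dif_pos hl]
    rw [hval l hl p hp]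
    exact ((hg0 _ (add_mem (add_mem (mul_mem (hmema l hl) (hmemP1 p hp))
      (mul_mem (hmemb l hl) (hmemP2 p hp))) (hmemc l hl))).symm)
end

section
/- Erdős multiplication table lower bound on incidences: the Szemerédi–Trotter bound is tight up to constants over any characteristic-zero field K; specifically, for every m, n ≥ 1 there exist a set P of at most O(m) points and a set L of at most O(n) lines in K² with I(P, L) ≥ c(m^{2/3}n^{2/3} + m + n) for some absolute constant c > 0. -/
open scoped Classical

/-- generic line -/
def lineGen (E : Type) [Field E] (a b c : E) : Set (E × E) :=
  {p : E × E | a * p.1 + b * p.2 + c = 0}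

lemma isLine_lineGen {E : Type} [Field E] {a b : E} (c : E) (h : (a, b) ≠ (0, 0)) :
    IsLine E (lineGen E a b c) := ⟨a, b, c, h, rfl⟩

lemma mem_lineGen {E : Type} [Field E] {a b c : E} {p : E × E} :
    p ∈ lineGen E a b c ↔ a * p.1 + b * p.2 + c = 0 := Iff.rfl

lemma cube_third {z : ℝ} (hz : 0 ≤ z) : (z ^ ((1:ℝ)/3)) ^ 3 = z := by
  rw [← Real.rpow_natCast (z ^ ((1:ℝ)/3)) 3, ← Real.rpow_mul hz]; norm_num

lemma half_le_floor {x : ℝ} (hx : 1 ≤ x) : x / 2 ≤ (⌊x⌋₊ : ℝ) := by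
  have h1 : (1:ℕ) ≤ ⌊x⌋₊ := Nat.le_floor (by exact_mod_cast hx)
  have h1' : (1:ℝ) ≤ (⌊x⌋₊ : ℝ) := by exact_mod_cast h1
  rcases le_or_gt x 2 with h | h
  · linarith
  · have := Nat.lt_floor_add_one x
    linarith

set_option maxHeartbeats 1600000 in
/-- The Szemerédi–Trotter bound is tight up to constants over any
characteristic-zero field. -/
theorem stmt18 :
    ∃ c C : ℝ, 0 < c ∧ 0 < C ∧
      ∀ (K : Type) [Field K] [CharZero K],
        ∀ m n : ℕ, 1 ≤ m → 1 ≤ n →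
          ∃ (P : Finset (K × K)) (L : Finset (Set (K × K))),
            (∀ l ∈ L, IsLine K l) ∧
            (P.card : ℝ) ≤ C * m ∧ (L.card : ℝ) ≤ C * n ∧
            c * ((m : ℝ) ^ ((2 : ℝ) / 3) * (n : ℝ) ^ ((2 : ℝ) / 3) + m + n) ≤
              (((P ×ˢ L).filter (fun pl => pl.1 ∈ pl.2)).card : ℝ) := by
  refine ⟨1/18, 4, by norm_num, by norm_num, ?_⟩
  intro K _ _ m n hm hn
  have hm0 : (0:ℝ) < m := by exact_mod_cast hm
  have hn0 : (0:ℝ) < n := by exact_mod_cast hn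
  have hm1 : (1:ℝ) ≤ m := by exact_mod_cast hm
  have hn1 : (1:ℝ) ≤ n := by exact_mod_cast hn
  set x : ℝ := ((m:ℝ)^2 / n) ^ ((1:ℝ)/3) with hxdef
  set y : ℝ := ((n:ℝ)^2 / m) ^ ((1:ℝ)/3) with hydef
  have hbx : (0:ℝ) ≤ (m:ℝ)^2 / n := by positivity
  have hby : (0:ℝ) ≤ (n:ℝ)^2 / m := by positivity
  have hx0 : 0 ≤ x := Real.rpow_nonneg hbx _
  have hy0 : 0 ≤ y := Real.rpow_nonneg hby _
  have hx3 : x ^ 3 = (m:ℝ)^2 / n := cube_third hbx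
  have hy3 : y ^ 3 = (n:ℝ)^2 / m := cube_third hby
  set r : ℕ := ⌊x⌋₊ with hrdef
  set t : ℕ := ⌊y⌋₊ with htdef
  have hrx : (r:ℝ) ≤ x := Nat.floor_le hx0
  have hty : (t:ℝ) ≤ y := Nat.floor_le hy0
  have hr0 : (0:ℝ) ≤ (r:ℝ) := Nat.cast_nonneg r
  have ht0 : (0:ℝ) ≤ (t:ℝ) := Nat.cast_nonneg t
  -- upper bounds on sizes
  have hrm : (r:ℝ)^2 * t ≤ m := by
    have h1 : ((r:ℝ)^2 * t)^3 ≤ ((m:ℝ))^3 := by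
      have e : (x^3)^2 * y^3 = (m:ℝ)^3 := by
        rw [hx3, hy3]; field_simp
      have : ((r:ℝ)^2*t)^3 = ((r:ℝ)^3)^2 * (t:ℝ)^3 := by ring
      rw [this, ← e]
      have h2 : (r:ℝ)^3 ≤ x^3 := pow_le_pow_left₀ hr0 hrx 3
      have h3 : (t:ℝ)^3 ≤ y^3 := pow_le_pow_left₀ ht0 hty 3
      exact mul_le_mul (pow_le_pow_left₀ (by positivity) h2 2) h3 (by positivity)
        (by positivity)
    exact le_of_pow_le_pow_left₀ (by norm_num) (le_of_lt hm0) h1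
  have htn : (r:ℝ) * (t:ℝ)^2 ≤ n := by
    have h1 : ((r:ℝ) * (t:ℝ)^2)^3 ≤ ((n:ℝ))^3 := by
      have e : x^3 * (y^3)^2 = (n:ℝ)^3 := by
        rw [hx3, hy3]; field_simp
      have : ((r:ℝ)*(t:ℝ)^2)^3 = (r:ℝ)^3 * ((t:ℝ)^3)^2 := by ring
      rw [this, ← e]
      have h2 : (r:ℝ)^3 ≤ x^3 := pow_le_pow_left₀ hr0 hrx 3
      have h3 : (t:ℝ)^3 ≤ y^3 := pow_le_pow_left₀ ht0 hty 3
      exact mul_le_mul h2 (pow_le_pow_left₀ (by positivity) h3 2) (by positivity)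
        (by positivity)
    exact le_of_pow_le_pow_left₀ (by norm_num) (le_of_lt hn0) h1
  -- the construction
  set P : Finset (K × K) :=
      ((Finset.range m).image fun i => (((i:ℕ):K), (0:K))) ∪
      ((Finset.range r ×ˢ Finset.range (2*t*r)).image fun q => (((q.1:ℕ):K), ((q.2:ℕ):K)))
    with hP
  set L : Finset (Set (K × K)) :=
      insert (lineGen K 0 1 0)
        (((Finset.range n).image fun a => lineGen K 1 (-((a:ℕ):K)) 0) ∪
         ((Finset.range t ×ˢ Finset.range (t*r)).image
            fun q => lineGen K ((q.1:ℕ):K) (-1) ((q.2:ℕ):K)))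
    with hL
  refine ⟨P, L, ?_, ?_, ?_, ?_⟩
  · -- all are lines
    intro l hl
    rw [hL] at hl
    simp only [Finset.mem_insert, Finset.mem_union, Finset.mem_image, Finset.mem_product,
      Finset.mem_range] at hl
    rcases hl with h | ⟨a, _, rfl⟩ | ⟨q, _, rfl⟩
    · rw [h]; exact isLine_lineGen _ (by simp)
    · exact isLine_lineGen _ (by simp)
    · exact isLine_lineGen _ (by
        intro h
        have := congrArg Prod.snd h
        simp at this)
  · -- |P| ≤ 4m
    have h1 : P.card ≤ m + r * (2*t*r) := by
      calc P.card ≤ ((Finset.range m).image fun i => (((i:ℕ):K), (0:K))).card +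
          ((Finset.range r ×ˢ Finset.range (2*t*r)).image
            fun q => (((q.1:ℕ):K), ((q.2:ℕ):K))).card := Finset.card_union_le _ _
        _ ≤ m + r * (2*t*r) := by
            gcongr
            · exact (Finset.card_image_le).trans (by simp)
            · exact (Finset.card_image_le).trans (by simp [Finset.card_product])
    have h2 : ((m + r * (2*t*r) : ℕ) : ℝ) ≤ 4 * m := by
      push_cast
      nlinarith [hrm, hm1]
    calc (P.card : ℝ) ≤ ((m + r * (2*t*r) : ℕ) : ℝ) := by exact_mod_cast h1
      _ ≤ 4 * m := h2
  · -- |L| ≤ 4n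
    have h1 : L.card ≤ 1 + (n + t * (t*r)) := by
      calc L.card ≤ _ + 1 := Finset.card_insert_le _ _
        _ ≤ (n + t*(t*r)) + 1 := by
            gcongr
            calc _ ≤ ((Finset.range n).image fun a => lineGen K 1 (-((a:ℕ):K)) 0).card +
                ((Finset.range t ×ˢ Finset.range (t*r)).image
                  fun q => lineGen K ((q.1:ℕ):K) (-1) ((q.2:ℕ):K)).card :=
                  Finset.card_union_le _ _
              _ ≤ n + t*(t*r) := by
                  gcongr
                  · exact (Finset.card_image_le).trans (by simp)
                  · exact (Finset.card_image_le).trans (by simp [Finset.card_product])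
        _ = 1 + (n + t*(t*r)) := by ring
    have h2 : ((1 + (n + t * (t*r)) : ℕ) : ℝ) ≤ 4 * n := by
      push_cast
      nlinarith [htn, hn1]
    calc (L.card : ℝ) ≤ ((1 + (n + t * (t*r)) : ℕ) : ℝ) := by exact_mod_cast h1
      _ ≤ 4 * n := h2
  · -- the incidence lower bound
    set F := ((P ×ˢ L).filter (fun pl => pl.1 ∈ pl.2)) with hF
    -- incidences from the m collinear points
    have hIm : m ≤ F.card := by
      have := Finset.card_le_card_of_injOn
        (f := fun i : ℕ => ((((i:ℕ):K), (0:K)), lineGen K 0 1 0))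
        (s := Finset.range m) (t := F) ?_ ?_
      · simpa using this
      · intro i hi
        rw [hF, Finset.mem_coe, Finset.mem_filter, Finset.mem_product]
        refine ⟨⟨?_, ?_⟩, ?_⟩
        · rw [hP]; exact Finset.mem_union_left _ (Finset.mem_image_of_mem _ hi)
        · rw [hL]; exact Finset.mem_insert_self _ _
        · simp [mem_lineGen]
      · intro i _ j _ h
        simp only [Prod.mk.injEq] at h
        exact_mod_cast h.1.1
    -- incidences from the n concurrent lines
    have hIn : n ≤ F.card := by
      have := Finset.card_le_card_of_injOn
        (f := fun a : ℕ => (((0:K), (0:K)), lineGen K 1 (-((a:ℕ):K)) 0))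
        (s := Finset.range n) (t := F) ?_ ?_
      · simpa using this
      · intro a ha
        rw [hF, Finset.mem_coe, Finset.mem_filter, Finset.mem_product]
        refine ⟨⟨?_, ?_⟩, ?_⟩
        · rw [hP]
          apply Finset.mem_union_left
          refine Finset.mem_image.mpr ⟨0, Finset.mem_range.mpr hm, by simp⟩
        · rw [hL]
          exact Finset.mem_insert_of_mem (Finset.mem_union_left _
            (Finset.mem_image_of_mem _ ha))
        · simp [mem_lineGen]
      · intro a _ b _ h
        simp only [Prod.mk.injEq] at h
        have hset := h.2
        have h1 : (((a:ℕ):K), (1:K)) ∈ lineGen K 1 (-((a:ℕ):K)) 0 := by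
          simp [mem_lineGen]
        rw [hset] at h1
        rw [mem_lineGen] at h1
        have : ((a:ℕ):K) = ((b:ℕ):K) := by linear_combination h1
        exact_mod_cast this
    -- incidences from the grid
    have hIC : r * (t * (t*r)) ≤ F.card := by
      have := Finset.card_le_card_of_injOn
        (f := fun q : ℕ × ℕ × ℕ =>
          ((((q.1:ℕ):K), (((q.2.1 * q.1 + q.2.2 : ℕ)):K)),
            lineGen K ((q.2.1:ℕ):K) (-1) ((q.2.2:ℕ):K)))
        (s := Finset.range r ×ˢ (Finset.range t ×ˢ Finset.range (t*r))) (t := F) ?_ ?_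
      · simpa [Finset.card_product] using this
      · rintro ⟨xx, aa, bb⟩ hq
        simp only [Finset.mem_coe, Finset.mem_product, Finset.mem_range] at hq
        obtain ⟨hxx, haa, hbb⟩ := hq
        rw [hF, Finset.mem_coe, Finset.mem_filter, Finset.mem_product]
        refine ⟨⟨?_, ?_⟩, ?_⟩
        · rw [hP]
          apply Finset.mem_union_right
          refine Finset.mem_image.mpr ⟨(xx, aa * xx + bb), ?_, rfl⟩
          simp only [Finset.mem_product, Finset.mem_range]
          refine ⟨hxx, ?_⟩
          have h1 : aa * xx < t * r := Nat.mul_lt_mul'' haa hxx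
          calc aa * xx + bb < t*r + t*r := Nat.add_lt_add h1 hbb
            _ = 2*t*r := by ring
        · rw [hL]
          apply Finset.mem_insert_of_mem
          apply Finset.mem_union_right
          exact Finset.mem_image.mpr ⟨(aa, bb), by
            simp only [Finset.mem_product, Finset.mem_range]; exact ⟨haa, hbb⟩, rfl⟩
        · rw [mem_lineGen]
          push_cast
          ring
      · rintro ⟨xx, aa, bb⟩ _ ⟨xx', aa', bb'⟩ _ h
        simp only [Prod.mk.injEq] at h
        obtain ⟨⟨h1, _⟩, hset⟩ := h
        have hxx : xx = xx' := by exact_mod_cast h1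
        have hb : bb = bb' := by
          have hmem : ((0:K), ((bb:ℕ):K)) ∈ lineGen K ((aa:ℕ):K) (-1) ((bb:ℕ):K) := by
            simp [mem_lineGen]
          rw [hset] at hmem
          rw [mem_lineGen] at hmem
          have : ((bb:ℕ):K) = ((bb':ℕ):K) := by linear_combination -hmem
          exact_mod_cast this
        have ha : aa = aa' := by
          have hmem : ((1:K), (((aa + bb : ℕ)):K)) ∈ lineGen K ((aa:ℕ):K) (-1) ((bb:ℕ):K) := by
            rw [mem_lineGen]; push_cast; ring
          rw [hset] at hmem
          rw [mem_lineGen] at hmem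
          push_cast at hmem
          have : ((aa:ℕ):K) = ((aa':ℕ):K) := by
            subst hb
            linear_combination -hmem
          exact_mod_cast this
        simp [hxx, hb, ha]
    have hImR : (m:ℝ) ≤ F.card := by exact_mod_cast hIm
    have hInR : (n:ℝ) ≤ F.card := by exact_mod_cast hIn
    have hICR : (r:ℝ)^2 * (t:ℝ)^2 ≤ F.card := by
      have : ((r * (t * (t*r)) : ℕ) : ℝ) = (r:ℝ)^2 * (t:ℝ)^2 := by push_cast; ring
      rw [← this]
      exact_mod_cast hIC
    set G : ℝ := (m : ℝ) ^ ((2 : ℝ) / 3) * (n : ℝ) ^ ((2 : ℝ) / 3) with hG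
    by_cases h1 : (n:ℝ) ≤ (m:ℝ)^2
    · by_cases h2 : (m:ℝ) ≤ (n:ℝ)^2
      · -- main case : the grid provides the incidences
        have hxy : x * y = ((m:ℝ) * n) ^ ((1:ℝ)/3) := by
          rw [hxdef, hydef, ← Real.mul_rpow hbx hby]
          congr 1
          field_simp
        have hx1 : 1 ≤ x := by
          rw [hxdef]
          calc (1:ℝ) = (1:ℝ) ^ ((1:ℝ)/3) := (Real.one_rpow _).symm
            _ ≤ ((m:ℝ)^2/n) ^ ((1:ℝ)/3) := by
                apply Real.rpow_le_rpow (by norm_num) _ (by norm_num)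
                rw [le_div_iff₀ hn0]; linarith
        have hy1 : 1 ≤ y := by
          rw [hydef]
          calc (1:ℝ) = (1:ℝ) ^ ((1:ℝ)/3) := (Real.one_rpow _).symm
            _ ≤ ((n:ℝ)^2/m) ^ ((1:ℝ)/3) := by
                apply Real.rpow_le_rpow (by norm_num) _ (by norm_num)
                rw [le_div_iff₀ hm0]; linarith
        have hrx2 : x / 2 ≤ (r:ℝ) := half_le_floor hx1
        have hty2 : y / 2 ≤ (t:ℝ) := half_le_floor hy1
        have hGxy : G = (x*y)^2 := by
          rw [hG, hxy, ← Real.rpow_natCast (((m:ℝ)*n) ^ ((1:ℝ)/3)) 2,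
            ← Real.rpow_mul (by positivity)]
          rw [← Real.mul_rpow (le_of_lt hm0) (le_of_lt hn0)]
          norm_num
        have hGle : G ≤ 16 * ((r:ℝ)^2 * (t:ℝ)^2) := by
          rw [hGxy]
          have hxy4 : x * y ≤ 4 * ((r:ℝ) * t) := by nlinarith
          have hxy0 : 0 ≤ x * y := mul_nonneg hx0 hy0
          nlinarith
        nlinarith [hICR, hImR, hInR]
      · -- m > n², so G ≤ m
        push_neg at h2
        have hGle : G ≤ (m:ℝ) := by
          have e1 : (n:ℝ) ^ ((2:ℝ)/3) ≤ (m:ℝ) ^ ((1:ℝ)/3) := by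
            have h' : (n:ℝ) ^ ((2:ℝ)/3) = ((n:ℝ)^2) ^ ((1:ℝ)/3) := by
              rw [← Real.rpow_natCast (n:ℝ) 2, ← Real.rpow_mul (le_of_lt hn0)]
              norm_num
            rw [h']
            exact Real.rpow_le_rpow (by positivity) (le_of_lt h2) (by norm_num)
          have e2 : (m:ℝ) ^ ((2:ℝ)/3) * (m:ℝ) ^ ((1:ℝ)/3) = m := by
            rw [← Real.rpow_add hm0]
            norm_num
          calc G ≤ (m:ℝ) ^ ((2:ℝ)/3) * (m:ℝ) ^ ((1:ℝ)/3) := by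
                rw [hG]; gcongr
            _ = m := e2
        nlinarith [hImR, hInR]
    · -- n > m², so G ≤ n
      push_neg at h1
      have hGle : G ≤ (n:ℝ) := by
        have e1 : (m:ℝ) ^ ((2:ℝ)/3) ≤ (n:ℝ) ^ ((1:ℝ)/3) := by
          have h' : (m:ℝ) ^ ((2:ℝ)/3) = ((m:ℝ)^2) ^ ((1:ℝ)/3) := by
            rw [← Real.rpow_natCast (m:ℝ) 2, ← Real.rpow_mul (le_of_lt hm0)]
            norm_num
          rw [h']
          exact Real.rpow_le_rpow (by positivity) (le_of_lt h1) (by norm_num)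
        have e2 : (n:ℝ) ^ ((1:ℝ)/3) * (n:ℝ) ^ ((2:ℝ)/3) = n := by
          rw [← Real.rpow_add hn0]
          norm_num
        calc G ≤ (n:ℝ) ^ ((1:ℝ)/3) * (n:ℝ) ^ ((2:ℝ)/3) := by
              rw [hG]; gcongr
          _ = n := e2
      nlinarith [hImR, hInR]
end
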